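/- For all positive integers k and g ≥ 1 (where g = |G|), the sum over odd e with 1 ≤ e ≤ k of C(k,e)·(e·C_{(e-1)/2})²·g^e is at most g^k · 2^(3k+2) · k, where C_p denotes the p-th Catalan number. -/
import Mathlib

lemma choose_le_two_pow' (n k : ℕ) : Nat.choose n k ≤ 2 ^ n := by
  rcases le_or_gt k n with h | h
  · calc Nat.choose n k ≤ ∑ m ∈ Finset.range (n + 1), n.choose m :=
        Finset.single_le_sum (fun i _ => Nat.zero_le _)
          (Finset.mem_range.mpr (Nat.lt_succ_of_le h))
      _ = 2 ^ n := Nat.sum_range_choose n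
  · rw [Nat.choose_eq_zero_of_lt h]; exact Nat.zero_le _

lemma odd_mul_catalan_le (e : ℕ) (he : Odd e) :
    e * catalan ((e - 1) / 2) ≤ 2 ^ e := by
  obtain ⟨p, rfl⟩ := he
  have h1 : (2 * p + 1 - 1) / 2 = p := by omega
  rw [h1]
  have h2 : (p + 1) * catalan p = p.centralBinom :=
    succ_mul_catalan_eq_centralBinom p
  have h3 : p.centralBinom ≤ 2 ^ (2 * p) := by
    rw [Nat.centralBinom_eq_two_mul_choose]
    exact choose_le_two_pow' (2 * p) p
  calc (2 * p + 1) * catalan p ≤ 2 * ((p + 1) * catalan p) := by ring_nf; nlinarith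
    _ = 2 * p.centralBinom := by rw [h2]
    _ ≤ 2 * 2 ^ (2 * p) := by omega
    _ = 2 ^ (2 * p + 1) := by ring

/-- Upper bound on the number of restricted glue window submovies:
`∑_{odd e, 1 ≤ e ≤ k} C(k,e)·(e·C_{(e-1)/2})²·g^e ≤ g^k · 2^(3k+2) · k`. -/
theorem sum_submovies_le (k g : ℕ) (hk : 1 ≤ k) (hg : 1 ≤ g) :
    ∑ e ∈ (Finset.Icc 1 k).filter (fun e => Odd e),
        Nat.choose k e * (e * catalan ((e - 1) / 2)) ^ 2 * g ^ e ≤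
      g ^ k * 2 ^ (3 * k + 2) * k := by
  have hcard : ((Finset.Icc 1 k).filter (fun e => Odd e)).card ≤ k := by
    calc ((Finset.Icc 1 k).filter (fun e => Odd e)).card
        ≤ (Finset.Icc 1 k).card := Finset.card_filter_le _ _
      _ = k := by rw [Nat.card_Icc]; omega
  have hterm : ∀ e ∈ (Finset.Icc 1 k).filter (fun e => Odd e),
      Nat.choose k e * (e * catalan ((e - 1) / 2)) ^ 2 * g ^ e ≤
        2 ^ k * 2 ^ (2 * k) * g ^ k := by
    intro e he
    rw [Finset.mem_filter, Finset.mem_Icc] at he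
    obtain ⟨⟨h1e, hek⟩, hodd⟩ := he
    refine Nat.mul_le_mul (Nat.mul_le_mul (choose_le_two_pow' k e) ?_)
      (Nat.pow_le_pow_right hg hek)
    calc (e * catalan ((e - 1) / 2)) ^ 2 ≤ (2 ^ e) ^ 2 :=
        Nat.pow_le_pow_left (odd_mul_catalan_le e hodd) 2
      _ = 2 ^ (2 * e) := by rw [← pow_mul]; ring_nf
      _ ≤ 2 ^ (2 * k) := Nat.pow_le_pow_right (by norm_num) (by omega)
  calc ∑ e ∈ (Finset.Icc 1 k).filter (fun e => Odd e),
        Nat.choose k e * (e * catalan ((e - 1) / 2)) ^ 2 * g ^ e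
      ≤ ((Finset.Icc 1 k).filter (fun e => Odd e)).card *
        (2 ^ k * 2 ^ (2 * k) * g ^ k) := Finset.sum_le_card_nsmul _ _ _ hterm
    _ ≤ k * (2 ^ k * 2 ^ (2 * k) * g ^ k) := Nat.mul_le_mul_right _ hcard
    _ ≤ g ^ k * 2 ^ (3 * k + 2) * k := by
        rw [show (3 : ℕ) * k + 2 = k + 2 * k + 2 by ring, pow_add, pow_add]
        ring_nf
        exact Nat.le_mul_of_pos_right _ (by norm_num)
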